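/- arXiv:1901.03306 — 11 statements merged into one kernel-verified Lean document; each statement's English description precedes it below -/
import Mathlib

section
/- Let (X, X_+) be an ordered Banach space and assume that X is separable as a topological space. Then there exists a strictly positive functional in X'. -/
/-!
Each nonzero `x ∈ C` has `-x ∉ C`, so separating `-x` from the closed convex cone `C` gives a
continuous functional that is nonnegative on `C` and positive at `x`. Positivity at `x` is an
open condition, so by second countability countably many of these functionals already cover
`C \ {0}`; a convergent series of them with positive weights is strictly positive.
-/

open TopologicalSpace

def ProperCone.ofNonnegCombination {E : Type*} [AddCommGroup E] [Module ℝ E] [TopologicalSpace E]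
    (C : Set E) (hne : C.Nonempty) (hclosed : IsClosed C)
    (hcone : ∀ (a b : ℝ), 0 ≤ a → 0 ≤ b → ∀ x ∈ C, ∀ y ∈ C, a • x + b • y ∈ C) :
    ProperCone ℝ E where
  carrier := C
  add_mem' {x y} hx hy := by simpa using hcone 1 1 zero_le_one zero_le_one x hx y hy
  zero_mem' := by
    obtain ⟨x, hx⟩ := hne
    simpa using hcone 0 0 le_rfl le_rfl x hx x hx
  smul_mem' c x hx := by simpa using hcone c 0 c.2 le_rfl x hx x hx
  isClosed' := hclosed

theorem exists_pos_summable_smul {ι E : Type*} [Countable ι] [NormedAddCommGroup E]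
    [NormedSpace ℝ E] [CompleteSpace E] (v : ι → E) :
    ∃ c : ι → ℝ, (∀ i, 0 < c i) ∧ Summable fun i ↦ c i • v i := by
  have := Encodable.ofCountable ι
  refine ⟨fun i ↦ (1 / 2 : ℝ) ^ Encodable.encode i / (1 + ‖v i‖), fun i ↦ by positivity, ?_⟩
  refine .of_norm_bounded summable_geometric_two_encode fun i ↦ ?_
  rw [norm_smul, Real.norm_of_nonneg (by positivity), div_mul_eq_mul_div, div_le_iff₀ (by positivity)]
  gcongr
  linarith

theorem exists_countable_subfamily_of_exists_pos {X ι : Type*} [TopologicalSpace X]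
    [SecondCountableTopology X] (f : ι → X → ℝ) (hf : ∀ i, Continuous (f i)) :
    ∃ t : Set ι, t.Countable ∧ ∀ x, (∃ i, 0 < f i x) → ∃ i ∈ t, 0 < f i x := by
  obtain ⟨t, htc, ht⟩ := isOpen_iUnion_countable (fun i ↦ {x | 0 < f i x})
    fun i ↦ isOpen_lt continuous_const (hf i)
  refine ⟨t, htc, fun x hx ↦ ?_⟩
  simpa using ht.ge (Set.mem_iUnion.2 hx)

theorem exists_strictly_positive_of_forall_exists_pos {X ι : Type*} [NormedAddCommGroup X]
    [NormedSpace ℝ X] [SecondCountableTopology X] (C : Set X) (f : ι → StrongDual ℝ X)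
    (hf : ∀ i, ∀ x ∈ C, 0 ≤ f i x) (hpos : ∀ x ∈ C, x ≠ 0 → ∃ i, 0 < f i x) :
    ∃ g : StrongDual ℝ X, (∀ x ∈ C, 0 ≤ g x) ∧ ∀ x ∈ C, x ≠ 0 → 0 < g x := by
  obtain ⟨t, htc, ht⟩ := exists_countable_subfamily_of_exists_pos (fun i ↦ ⇑(f i))
    fun i ↦ (f i).continuous
  have := htc.to_subtype
  obtain ⟨c, hc, hsum⟩ := exists_pos_summable_smul fun i : t ↦ f i
  set g := ∑' i, c i • f i
  have hg : ∀ x, HasSum (fun i : t ↦ c i * f i x) (g x) := fun x ↦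
    hsum.hasSum.mapL (ContinuousLinearMap.apply ℝ ℝ x)
  have hterm : ∀ x ∈ C, ∀ i : t, 0 ≤ c i * f i x := fun x hx i ↦
    mul_nonneg (hc i).le (hf i x hx)
  refine ⟨g, fun x hx ↦ hasSum_le (hterm x hx) hasSum_zero (hg x), fun x hx hx0 ↦ ?_⟩
  obtain ⟨i, hit, hi⟩ := ht x (hpos x hx hx0)
  exact (mul_pos (hc ⟨i, hit⟩) hi).trans_le (le_hasSum (hg x) ⟨i, hit⟩ fun j _ ↦ hterm x hx j)

theorem exists_strictly_positive_functional_of_separable_general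
    {X : Type*} [NormedAddCommGroup X] [NormedSpace ℝ X]
    [TopologicalSpace.SeparableSpace X]
    (C : Set X) (hne : C.Nonempty) (hclosed : IsClosed C)
    (hcone : ∀ (a b : ℝ), 0 ≤ a → 0 ≤ b → ∀ x ∈ C, ∀ y ∈ C, a • x + b • y ∈ C)
    (hpointed : ∀ x ∈ C, -x ∈ C → x = 0) :
    ∃ x' : X →L[ℝ] ℝ, (∀ x ∈ C, 0 ≤ x' x) ∧ ∀ x ∈ C, x ≠ 0 → 0 < x' x := by
  have hsep : ∀ x : {x // x ∈ C ∧ x ≠ 0},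
      ∃ f : StrongDual ℝ X, (∀ y ∈ C, 0 ≤ f y) ∧ 0 < f x := by
    rintro ⟨x, hx, hx0⟩
    obtain ⟨f, hfC, hfx⟩ := (ProperCone.ofNonnegCombination C hne hclosed hcone)
      |>.hyperplane_separation_point (x₀ := -x) fun h ↦ hx0 (hpointed x hx h)
    exact ⟨f, hfC, by simpa using hfx⟩
  choose f hfC hfx using hsep
  exact exists_strictly_positive_of_forall_exists_pos C f hfC
    fun x hx hx0 ↦ ⟨⟨x, hx, hx0⟩, hfx _⟩

/-- If an ordered Banach space `X` is separable, then there exists a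
strictly positive functional in `X'`. -/
theorem exists_strictly_positive_functional_of_separable
    {X : Type*} [NormedAddCommGroup X] [NormedSpace ℝ X] [CompleteSpace X]
    [TopologicalSpace.SeparableSpace X]
    (C : Set X) (hne : C.Nonempty) (hclosed : IsClosed C)
    (hcone : ∀ (a b : ℝ), 0 ≤ a → 0 ≤ b → ∀ x ∈ C, ∀ y ∈ C, a • x + b • y ∈ C)
    (hpointed : ∀ x ∈ C, -x ∈ C → x = 0) :
    ∃ x' : X →L[ℝ] ℝ, (∀ x ∈ C, 0 ≤ x' x) ∧ ∀ x ∈ C, x ≠ 0 → 0 < x' x :=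
  exists_strictly_positive_functional_of_separable_general C hne hclosed hcone hpointed
end

section
/- Let (X, X_+) be an ordered Banach space whose positive cone X_+ has nonempty topological interior. Then for every vector x ∈ X_+ the following are equivalent: (i) x is an almost interior point of X_+; (ii) x is a quasi-interior point of X_+; (iii) x lies in the topological interior of X_+. -/
/-!
An interior point `x` of the cone absorbs every vector, so its principal ideal is the whole
space. A positive functional vanishing at `x` vanishes on the principal ideal of `x`, hence
everywhere when that ideal is dense. Conversely, at a boundary point `x` of a convex cone with
nonempty interior, Hahn–Banach gives a nonzero functional `f` attaining its maximum over the cone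
at `x`; as the cone contains `0` and `2 • x`, `f x = 0`, and `-f` is a nonzero positive functional
vanishing at `x`.
-/

open Filter Topology

section

variable {E : Type*} [AddCommGroup E] [Module ℝ E] {C : Set E} {x : E}

def principalIdeal (C : Set E) (x : E) : Set E :=
  {y | ∃ l : ℝ, 0 ≤ l ∧ y + l • x ∈ C ∧ l • x - y ∈ C}

variable [TopologicalSpace E]

lemma eventually_smul_add_mem_of_mem_interior [ContinuousAdd E] [ContinuousSMul ℝ E]
    (hsmul : ∀ t : ℝ, 0 ≤ t → ∀ y ∈ C, t • y ∈ C)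
    (hx : x ∈ interior C) (v : E) : ∀ᶠ l : ℝ in atTop, l • x + v ∈ C := by
  have hlim : Tendsto (fun l : ℝ => x + l⁻¹ • v) atTop (𝓝 x) := by
    simpa using tendsto_const_nhds.add ((tendsto_inv_atTop_zero (𝕜 := ℝ)).smul_const v)
  filter_upwards [hlim (mem_interior_iff_mem_nhds.mp hx), eventually_gt_atTop 0] with l hl hl0
  simpa [smul_add, smul_smul, hl0.ne'] using hsmul l hl0.le _ hl

lemma principalIdeal_eq_univ_of_mem_interior [ContinuousAdd E] [ContinuousSMul ℝ E]
    (hsmul : ∀ t : ℝ, 0 ≤ t → ∀ y ∈ C, t • y ∈ C)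
    (hx : x ∈ interior C) : principalIdeal C x = Set.univ := by
  refine Set.eq_univ_of_forall fun y => ?_
  obtain ⟨l, hl, hplus, hminus⟩ := ((eventually_ge_atTop 0).and
    ((eventually_smul_add_mem_of_mem_interior hsmul hx y).and
      (eventually_smul_add_mem_of_mem_interior hsmul hx (-y)))).exists
  exact ⟨l, hl, by rwa [add_comm], by rwa [sub_eq_add_neg]⟩

lemma apply_eq_zero_of_mem_principalIdeal {f : E →L[ℝ] ℝ} (hf : ∀ y ∈ C, 0 ≤ f y)
    (hfx : f x = 0) {y : E} (hy : y ∈ principalIdeal C x) : f y = 0 := by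
  obtain ⟨l, -, hplus, hminus⟩ := hy
  have h₁ := hf _ hplus
  have h₂ := hf _ hminus
  simp only [map_add, map_sub, map_smul, hfx, smul_zero] at h₁ h₂
  linarith

lemma eq_zero_of_dense_principalIdeal {f : E →L[ℝ] ℝ} (hf : ∀ y ∈ C, 0 ≤ f y)
    (hfx : f x = 0) (hdense : Dense (principalIdeal C x)) : f = 0 :=
  DFunLike.coe_injective <| f.continuous.ext_on hdense continuous_zero fun _ hy =>
    apply_eq_zero_of_mem_principalIdeal hf hfx hy

lemma apply_pos_of_dense_principalIdeal {f : E →L[ℝ] ℝ} (hf : ∀ y ∈ C, 0 ≤ f y)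
    (hf₀ : f ≠ 0) (hx : x ∈ C) (hdense : Dense (principalIdeal C x)) : 0 < f x :=
  (hf x hx).lt_of_ne fun h => hf₀ (eq_zero_of_dense_principalIdeal hf h.symm hdense)

lemma exists_nonneg_ne_zero_apply_eq_zero_of_notMem_interior [IsTopologicalAddGroup E]
    [ContinuousSMul ℝ E] (hconv : Convex ℝ C)
    (hsmul : ∀ t : ℝ, 0 ≤ t → ∀ y ∈ C, t • y ∈ C) (hint : (interior C).Nonempty)
    (hx : x ∈ C) (hxi : x ∉ interior C) :
    ∃ f : E →L[ℝ] ℝ, (∀ y ∈ C, 0 ≤ f y) ∧ f ≠ 0 ∧ f x = 0 := by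
  obtain ⟨f, hf₀, hmax⟩ := geometric_hahn_banach_of_nonempty_interior_point hconv hxi hint
  have hfx : f x = 0 := by
    have h₀ := hmax _ (hsmul 0 le_rfl x hx)
    have h₂ := hmax _ (hsmul 2 zero_le_two x hx)
    simp only [map_smul, smul_eq_mul, zero_mul] at h₀ h₂
    linarith
  exact ⟨-f, fun y hy => by simpa [hfx] using hmax y hy, neg_ne_zero.mpr hf₀, by simp [hfx]⟩

end

theorem almost_interior_iff_quasi_interior_iff_interior_general
    {X : Type*} [NormedAddCommGroup X] [NormedSpace ℝ X]
    (C : Set X)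
    (hcone : ∀ (a b : ℝ), 0 ≤ a → 0 ≤ b → ∀ x ∈ C, ∀ y ∈ C, a • x + b • y ∈ C)
    (hint : (interior C).Nonempty)
    (x : X) (hx : x ∈ C) :
    List.TFAE
      [∀ x' : X →L[ℝ] ℝ, (∀ y ∈ C, 0 ≤ x' y) → x' ≠ 0 → 0 < x' x,
       Dense {y : X | ∃ l : ℝ, 0 ≤ l ∧ y + l • x ∈ C ∧ l • x - y ∈ C},
       x ∈ interior C] := by
  have hsmul : ∀ t : ℝ, 0 ≤ t → ∀ y ∈ C, t • y ∈ C := fun t ht y hy => by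
    simpa using hcone t 0 ht le_rfl y hy y hy
  have hconv : Convex ℝ C := fun a ha b hb s t hs ht _ => hcone s t hs ht a ha b hb
  tfae_have 3 → 2 := fun hxi => by
    change Dense (principalIdeal C x)
    rw [principalIdeal_eq_univ_of_mem_interior hsmul hxi]
    exact dense_univ
  tfae_have 2 → 1 := fun hdense f hf hf₀ => apply_pos_of_dense_principalIdeal hf hf₀ hx hdense
  tfae_have 1 → 3 := fun hpos => by
    by_contra hxi
    obtain ⟨f, hf, hf₀, hfx⟩ :=
      exists_nonneg_ne_zero_apply_eq_zero_of_notMem_interior hconv hsmul hint hx hxi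
    exact (hpos f hf hf₀).ne' hfx
  tfae_finish

/-- If the positive cone `X₊` of an ordered Banach space has nonempty
topological interior, then for `x ∈ X₊` the following are equivalent: (i) `x` is an
almost interior point of `X₊`; (ii) `x` is a quasi-interior point of `X₊`; (iii) `x`
lies in the topological interior of `X₊`. -/
theorem almost_interior_iff_quasi_interior_iff_interior
    {X : Type*} [NormedAddCommGroup X] [NormedSpace ℝ X] [CompleteSpace X]
    (C : Set X) (hne : C.Nonempty) (hclosed : IsClosed C)
    (hcone : ∀ (a b : ℝ), 0 ≤ a → 0 ≤ b → ∀ x ∈ C, ∀ y ∈ C, a • x + b • y ∈ C)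
    (hpointed : ∀ x ∈ C, -x ∈ C → x = 0)
    (hint : (interior C).Nonempty)
    (x : X) (hx : x ∈ C) :
    List.TFAE
      [∀ x' : X →L[ℝ] ℝ, (∀ y ∈ C, 0 ≤ x' y) → x' ≠ 0 → 0 < x' x,
       Dense {y : X | ∃ l : ℝ, 0 ≤ l ∧ y + l • x ∈ C ∧ l • x - y ∈ C},
       x ∈ interior C] :=
  almost_interior_iff_quasi_interior_iff_interior_general C hcone hint x hx
end

section
/- Let (X, X_+) be an ordered Banach space such that the dimension of X is at least 2 and X_+ ≠ {0}. Then there exist a nonzero point x ∈ X_+ which is not an almost interior point of X_+, and a nonzero positive functional x' ∈ X' which is not strictly positive. -/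
/-!
A nonzero boundary point `a` of `C` exists because `X \ {0}` is connected when `dim X ≥ 2` and
meets both `C` (at some `x ≠ 0`) and its complement (at `-x`). Separating `C` from an exterior point
close to `a` gives a functional `g` bounded below on `C`, and Ekeland's principle for `g` on `C`
yields `z ∈ C` close to `a`, hence `z ≠ 0`, such that the cone `z + {v | g v + k‖v‖ ≤ 0}` meets `C`
only at `z` (the Bishop–Phelps argument). Separating `C` from the interior of that cone gives a
nonzero `h` minimal over `C` at `z`; as `C` is a cone this minimum is `0`, so `h ≥ 0` on `C` and
`h z = 0`.
-/

open Set Filter Topology Metric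

theorem LowerSemicontinuous.exists_ekeland_point {M : Type*} [MetricSpace M] [CompleteSpace M]
    {f : M → ℝ} (hf : LowerSemicontinuous f) (hbdd : BddBelow (range f)) {k : ℝ} (hk : 0 < k)
    (a : M) : ∃ z, f z + k * dist z a ≤ f a ∧ ∀ y, f y + k * dist y z ≤ f z → y = z := by
  set S : M → Set M := fun w => {x | f x + k * dist x w ≤ f w}
  have self_mem (w : M) : w ∈ S w := by simp [S]
  have S_closed (w : M) : IsClosed (S w) :=
    (hf.add (continuous_const.mul (continuous_id.dist continuous_const)).lowerSemicontinuous
      ).isClosed_preimage (f w)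
  have S_trans {x y w : M} (hx : x ∈ S y) (hy : y ∈ S w) : x ∈ S w := by
    simp only [S, mem_ofPred_eq] at hx hy ⊢
    nlinarith [dist_triangle x y w]
  have almost_min (w : M) (n : ℕ) : ∃ w' ∈ S w, ∀ x ∈ S w, f w' ≤ f x + (1 / 2) ^ n := by
    obtain ⟨_, ⟨w', hw', rfl⟩, hlt⟩ :=
      exists_lt_of_csInf_lt (Nonempty.image f ⟨w, self_mem w⟩)
      (lt_add_of_pos_right (sInf (f '' S w)) (by positivity : (0 : ℝ) < (1 / 2) ^ n))
    exact ⟨w', hw', fun x hx => hlt.le.trans (by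
      gcongr; exact csInf_le (hbdd.mono (image_subset_range f _)) (mem_image_of_mem f hx))⟩
  choose next next_mem next_le using almost_min
  -- Each `z (n + 1)` almost minimises `f` on `S (z n)`, which squeezes `S (z (n + 1))` to a point.
  let z : ℕ → M := fun n => Nat.rec a (fun n w => next w n) n
  set T : ℕ → Set M := fun n => S (z (n + 1))
  have T_subset (n : ℕ) : T n ⊆ S (z n) := fun x hx => S_trans hx (next_mem _ _)
  have T_anti : Antitone T := antitone_nat_of_succ_le fun n => T_subset (n + 1)
  have T_subset_ball (n : ℕ) : T n ⊆ closedBall (z (n + 1)) ((1 / 2) ^ n / k) := by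
    intro x hx
    have h₁ : f x + k * dist x (z (n + 1)) ≤ f (z (n + 1)) := hx
    have h₂ := next_le (z n) n x (T_subset n hx)
    rw [mem_closedBall, le_div_iff₀ hk]
    linarith
  have diam_T : Tendsto (fun n => diam (T n)) atTop (𝓝 0) := by
    refine squeeze_zero (fun n => diam_nonneg)
      (fun n => diam_le_of_subset_closedBall (by positivity) (T_subset_ball n)) ?_
    simpa using ((tendsto_pow_atTop_nhds_zero_of_lt_one (by norm_num : (0 : ℝ) ≤ 1 / 2)
      (by norm_num)).div_const k).const_mul 2
  obtain ⟨z₀, hz₀⟩ := nonempty_iInter_of_nonempty_biInter (fun n => S_closed _)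
    (fun n => isBounded_closedBall.subset (T_subset_ball n))
    (fun N => ⟨z (N + 1 + 1), mem_iInter₂.2 fun n hn => T_anti hn (next_mem _ _)⟩) diam_T
  rw [mem_iInter] at hz₀
  refine ⟨z₀, T_subset 0 (hz₀ 0), fun y hy => ?_⟩
  have hyT (n : ℕ) : y ∈ T n := S_trans hy (hz₀ n)
  refine dist_le_zero.1 (ge_of_tendsto' diam_T fun n => dist_le_diam_of_mem ?_ (hyT n) (hz₀ n))
  exact isBounded_closedBall.subset (T_subset_ball n)

theorem IsPreconnected.inter_frontier_nonempty {α : Type*} [TopologicalSpace α] {s t : Set α}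
    (hs : IsPreconnected s) (hst : (s ∩ t).Nonempty) (hs_diff : (s \ t).Nonempty) :
    (s ∩ frontier t).Nonempty := by
  by_contra! h
  have hint : ∀ x ∈ s, x ∈ closure t → x ∈ interior t := fun x hxs hxt =>
    by_contra fun hx => h.subset ⟨hxs, hxt, hx⟩
  obtain ⟨x, hxs, hxt⟩ := hst
  have hs_int : s ⊆ interior t := hs.subset_of_closure_inter_subset isOpen_interior
    ⟨x, hxs, hint x hxs (subset_closure hxt)⟩
    fun y ⟨hy, hys⟩ => hint y hys (closure_mono interior_subset hy)
  obtain ⟨y, hys, hyt⟩ := hs_diff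
  exact hyt (interior_subset (hs_int hys))

theorem exists_ne_zero_mem_frontier {X : Type*} [NormedAddCommGroup X] [NormedSpace ℝ X]
    (hX : 1 < Module.rank ℝ X) {C : Set X} (hC : ∃ x ∈ C, x ≠ 0) (hCc : ∃ x ∉ C, x ≠ 0) :
    ∃ a ∈ frontier C, a ≠ 0 := by
  obtain ⟨x, hxC, hx⟩ := hC
  obtain ⟨y, hyC, hy⟩ := hCc
  obtain ⟨a, ha, haC⟩ := (isPathConnected_compl_singleton_of_one_lt_rank hX 0).isConnected
    |>.isPreconnected.inter_frontier_nonempty ⟨x, hx, hxC⟩ ⟨y, hy, hyC⟩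
  exact ⟨a, haC, ha⟩

theorem LinearMap.eq_zero_of_isMinOn_of_smul_mem {X : Type*} [AddCommGroup X] [Module ℝ X]
    {C : Set X} (hC : ∀ t : ℝ, 0 ≤ t → ∀ x ∈ C, t • x ∈ C) (h : X →ₗ[ℝ] ℝ) {z : X} (hz : z ∈ C)
    (hmin : IsMinOn h C z) : h z = 0 := by
  have h₀ : h z ≤ h ((0 : ℝ) • z) := hmin (hC 0 le_rfl z hz)
  have h₂ : h z ≤ h ((2 : ℝ) • z) := hmin (hC 2 zero_le_two z hz)
  simp only [map_smul, smul_eq_mul] at h₀ h₂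
  linarith

theorem ContinuousLinearMap.exists_add_mul_norm_neg {X : Type*} [NormedAddCommGroup X]
    [NormedSpace ℝ X] (g : X →L[ℝ] ℝ) {k : ℝ} (hk₀ : 0 ≤ k) (hk : k < ‖g‖) :
    ∃ u, g u + k * ‖u‖ < 0 := by
  obtain ⟨x, hx, hgx⟩ := g.exists_lt_apply_of_lt_opNorm hk
  have hkx : k * ‖x‖ < |g x| := (mul_le_of_le_one_right hk₀ hx.le).trans_lt hgx
  rcases le_total 0 (g x) with h | h
  · exact ⟨-x, by rw [map_neg, norm_neg, ← abs_of_nonneg h]; linarith⟩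
  · exact ⟨x, by rw [abs_of_nonpos h] at hkx; linarith⟩

theorem Convex.exists_isMinOn_of_forall_add_mul_norm_le {X : Type*} [NormedAddCommGroup X]
    [NormedSpace ℝ X] {C : Set X} (hC : Convex ℝ C) {g : X →L[ℝ] ℝ} {k : ℝ} (hk₀ : 0 ≤ k)
    (hk : k < ‖g‖) {z : X} (hz : z ∈ C) (hmax : ∀ y ∈ C, g y + k * ‖y - z‖ ≤ g z → y = z) :
    ∃ h : X →L[ℝ] ℝ, h ≠ 0 ∧ IsMinOn h C z := by
  set φ : X → ℝ := fun x => g x + k * ‖x - z‖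
  set A : Set X := {x | φ x < g z}
  have hφ : ConvexOn ℝ univ φ := g.toLinearMap.convexOn convex_univ |>.add
    (((convexOn_norm convex_univ).comp_affineMap
      (AffineMap.id ℝ X - AffineMap.const ℝ X z)).smul hk₀)
  have hA_convex : Convex ℝ A := by simpa [A] using hφ.convex_lt (g z)
  have hA_open : IsOpen A := isOpen_lt (by fun_prop) continuous_const
  have hdisj : Disjoint A C := disjoint_left.2 fun x hxA hxC => by
    have hxz := hmax x hxC (le_of_lt hxA)
    simp [A, φ, hxz] at hxA
  obtain ⟨u, hu⟩ := g.exists_add_mul_norm_neg hk₀ hk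
  have hray : ∀ t : ℝ, 0 < t → z + t • u ∈ A := fun t ht => by
    have : t * (g u + k * ‖u‖) < 0 := mul_neg_of_pos_of_neg ht hu
    simp only [A, φ, mem_ofPred_eq, map_add, map_smul, add_sub_cancel_left, norm_smul,
      Real.norm_of_nonneg ht.le, smul_eq_mul]
    nlinarith
  have hz_closure : z ∈ closure A := by
    have hlim : Tendsto (fun t : ℝ => z + t • u) (𝓝[>] 0) (𝓝 z) := by
      have hcont : Continuous fun t : ℝ => z + t • u := by fun_prop
      simpa using (hcont.tendsto 0).mono_left (nhdsWithin_le_nhds : 𝓝[>] (0 : ℝ) ≤ 𝓝 0)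
    exact mem_closure_of_tendsto hlim (eventually_nhdsWithin_of_forall hray)
  obtain ⟨h, s, hA, hC'⟩ := geometric_hahn_banach_open hA_convex hA_open hC hdisj
  have hzs : h z ≤ s := closure_minimal (fun x hx => (hA x hx).le)
    (isClosed_le h.continuous continuous_const) hz_closure
  refine ⟨h, ?_, fun y hy => hzs.trans (hC' y hy)⟩
  rintro rfl
  have h₁ := hA _ (hray 1 one_pos)
  have h₂ := hC' z hz
  simp only [zero_apply] at h₁ h₂
  linarith

theorem IsClosed.exists_isMinOn_near_of_mem_frontier {X : Type*} [NormedAddCommGroup X]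
    [NormedSpace ℝ X] [CompleteSpace X] {C : Set X} (hCc : IsClosed C) (hC : Convex ℝ C)
    {a : X} (ha : a ∈ frontier C) {ε : ℝ} (hε : 0 < ε) :
    ∃ z ∈ C, dist z a < ε ∧ ∃ h : X →L[ℝ] ℝ, h ≠ 0 ∧ IsMinOn h C z := by
  rw [hCc.frontier_eq] at ha
  obtain ⟨haC, ha_int⟩ := ha
  obtain ⟨p, hpa, hpC⟩ : ∃ p, dist p a < ε / 2 ∧ p ∉ C := by
    by_contra! h
    exact ha_int (mem_interior_iff_mem_nhds.2 (mem_nhds_iff.2 ⟨ε / 2, by positivity, h⟩))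
  obtain ⟨g, s, hgp, hgC⟩ := geometric_hahn_banach_point_closed hC hCc hpC
  have hg : 0 < ‖g‖ := norm_pos_iff.2 fun hg => by
    have := hgC a haC
    simp only [hg, zero_apply] at hgp this
    linarith
  have : CompleteSpace C := hCc.completeSpace_coe
  obtain ⟨⟨z, hzC⟩, hza, hmax⟩ := LowerSemicontinuous.exists_ekeland_point
    (f := fun x : C => g x) (g.continuous.comp continuous_subtype_val).lowerSemicontinuous
    ⟨s, forall_mem_range.2 fun x => (hgC x x.2).le⟩ (half_pos hg) ⟨a, haC⟩
  simp only [Subtype.dist_eq] at hza hmax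
  have hga : g a - g p ≤ ‖g‖ * dist p a := by
    rw [← map_sub, dist_comm, dist_eq_norm]
    exact (Real.le_norm_self _).trans (g.le_opNorm _)
  refine ⟨z, hzC, ?_, hC.exists_isMinOn_of_forall_add_mul_norm_le (half_pos hg).le
    (half_lt_self hg) hzC fun y hy hyz =>
      congrArg Subtype.val (hmax ⟨y, hy⟩ (by rwa [dist_eq_norm]))⟩
  refine lt_of_mul_lt_mul_left ?_ (half_pos hg).le
  calc ‖g‖ / 2 * dist z a ≤ g a - g z := by linarith
    _ < g a - g p := by linarith [hgC z hzC]
    _ ≤ ‖g‖ * dist p a := hga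
    _ < ‖g‖ / 2 * ε := by nlinarith

/-- If an ordered Banach space has dimension at least `2` and nonzero
positive cone, then there exist a nonzero positive vector which is not an almost interior
point of the cone, and a nonzero positive functional which is not strictly positive. -/
theorem exists_non_almost_interior_point_and_non_strictly_positive_functional
    {X : Type*} [NormedAddCommGroup X] [NormedSpace ℝ X] [CompleteSpace X]
    (C : Set X) (hne : C.Nonempty) (hclosed : IsClosed C)
    (hcone : ∀ (a b : ℝ), 0 ≤ a → 0 ≤ b → ∀ x ∈ C, ∀ y ∈ C, a • x + b • y ∈ C)
    (hpointed : ∀ x ∈ C, -x ∈ C → x = 0)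
    (hdim : 2 ≤ Module.rank ℝ X)
    (hCnz : C ≠ {0}) :
    (∃ x ∈ C, x ≠ 0 ∧ ¬ (∀ x' : X →L[ℝ] ℝ, (∀ y ∈ C, 0 ≤ x' y) → x' ≠ 0 → 0 < x' x)) ∧
      (∃ x' : X →L[ℝ] ℝ, (∀ y ∈ C, 0 ≤ x' y) ∧ x' ≠ 0 ∧
        ¬ (∀ x ∈ C, x ≠ 0 → 0 < x' x)) := by
  obtain ⟨x, hxC, hx⟩ : ∃ x ∈ C, x ≠ 0 := by
    by_contra! h
    exact hCnz (hne.subset_singleton_iff.1 h)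
  obtain ⟨a, ha, ha0⟩ := exists_ne_zero_mem_frontier (Cardinal.one_lt_two.trans_le hdim)
    ⟨x, hxC, hx⟩ ⟨-x, fun h => hx (hpointed x hxC h), neg_ne_zero.2 hx⟩
  obtain ⟨z, hzC, hza, h, hh, hmin⟩ := hclosed.exists_isMinOn_near_of_mem_frontier
    (fun x hx y hy s t hs ht _ => hcone s t hs ht x hx y hy) ha (norm_pos_iff.2 ha0)
  have hz : z ≠ 0 := by
    rintro rfl
    simp at hza
  have hhz : h z = 0 := h.toLinearMap.eq_zero_of_isMinOn_of_smul_mem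
    (fun t ht x hx => by simpa using hcone t 0 ht le_rfl x hx x hx) hzC hmin
  have hpos : ∀ y ∈ C, 0 ≤ h y := fun y hy => hhz ▸ hmin hy
  exact ⟨⟨z, hzC, hz, fun hall => (hall h hpos hh).ne' hhz⟩,
    ⟨h, hpos, hh, fun hall => (hall z hzC hz).ne' hhz⟩⟩
end

section
/- Let (X, X_+) be an ordered Banach space and let Y ⊆ X be a vector subspace (not necessarily closed) which contains at least one almost interior point y₀ of X_+. For every linear map y' : Y → ℝ (not assumed continuous) the following are equivalent: (i) there exists a nonzero positive functional x' ∈ X' whose restriction to Y equals y'; (ii) the set X_+ + ker y' is not dense in X and ⟨y', y₀⟩ > 0; (iii) the set X_+ + ker y' is not dense in X and ⟨y', y⟩ > 0 for every vector y ∈ Y which is an almost interior point of X_+. -/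
/-!
`X₊ + ker y'` is a convex cone, so by Hahn–Banach it fails to be dense exactly when some nonzero
continuous functional is nonnegative on it, i.e. nonnegative on `X₊` and zero on `ker y'`. Such a
functional is strictly positive at the almost interior point `y₀`; restricted to `Y` it vanishes
on `ker y'`, hence is a multiple of `y'`, and the multiple is positive as soon as `⟨y', y₀⟩ > 0`.
-/

theorem LinearMap.eq_of_ker_le_of_apply_eq {K V : Type*} [Field K] [AddCommGroup V] [Module K V]
    {f g : V →ₗ[K] K} {x : V} (hker : ker g ≤ ker f) (hx : g x ≠ 0) (hfg : f x = g x) :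
    f = g := by
  ext z
  have hz : z - (g z / g x) • x ∈ ker g := by
    rw [mem_ker, map_sub, map_smul, smul_eq_mul, div_mul_cancel₀ _ hx, sub_self]
  have hfz := hker hz
  rwa [mem_ker, map_sub, map_smul, smul_eq_mul, hfg, div_mul_cancel₀ _ hx, sub_eq_zero] at hfz

theorem LinearMap.exists_pos_smul_comp_subtype_eq {K V : Type*} [Field K] [LinearOrder K]
    [IsStrictOrderedRing K] [AddCommGroup V] [Module K V] {Y : Submodule K V}
    {f : V →ₗ[K] K} {g : Y →ₗ[K] K} {y : Y} (hker : ker g ≤ ker (f ∘ₗ Y.subtype))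
    (hf : 0 < f y) (hg : 0 < g y) : ∃ c : K, 0 < c ∧ (c • f) ∘ₗ Y.subtype = g :=
  ⟨g y / f y, div_pos hg hf, eq_of_ker_le_of_apply_eq (hker.trans (ker_le_ker_smul _ _)) hg.ne'
    (by simp [div_mul_cancel₀ _ hf.ne'])⟩

namespace PointedCone

variable {R E : Type*} [Ring R] [PartialOrder R] [IsOrderedRing R] [AddCommGroup E] [Module R E]

lemma forall_mem_sup_nonneg_iff (P : PointedCone R E) (L : Submodule R E) (f : E →ₗ[R] R) :
    (∀ x ∈ P ⊔ (L : PointedCone R E), 0 ≤ f x) ↔ (∀ x ∈ P, 0 ≤ f x) ∧ ∀ x ∈ L, f x = 0 := by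
  refine ⟨fun h => ⟨fun x hx => h x (Submodule.mem_sup_left hx), fun x hx => ?_⟩, ?_⟩
  · have hneg := h (-x) (Submodule.mem_sup_right (L.neg_mem hx))
    rw [map_neg, neg_nonneg] at hneg
    exact le_antisymm hneg (h x (Submodule.mem_sup_right hx))
  · rintro ⟨hP, hL⟩ x hx
    obtain ⟨u, hu, z, hz, rfl⟩ := Submodule.mem_sup.1 hx
    rw [map_add, hL z hz, add_zero]
    exact hP u hu

lemma coe_sup_map_subtype_ker (P : PointedCone R E) (Y : Submodule R E) (y' : Y →ₗ[R] R) :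
    ((P ⊔ ofSubmodule ((LinearMap.ker y').map Y.subtype) : PointedCone R E) : Set E) =
      {w | ∃ u ∈ P, ∃ z : Y, y' z = 0 ∧ w = u + z} := by
  ext w
  simp only [Set.mem_ofPred_eq, SetLike.mem_coe, Submodule.mem_sup, mem_ofSubmodule_iff]
  constructor
  · rintro ⟨u, hu, _, ⟨z, hz, rfl⟩, rfl⟩
    exact ⟨u, hu, z, hz, rfl⟩
  · rintro ⟨u, hu, z, hz, rfl⟩
    exact ⟨u, hu, z, Submodule.mem_map_of_mem hz, rfl⟩

end PointedCone

theorem PointedCone.not_dense_iff_exists_ne_zero_nonneg {E : Type*} [TopologicalSpace E]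
    [AddCommGroup E] [IsTopologicalAddGroup E] [Module ℝ E] [ContinuousSMul ℝ E]
    [LocallyConvexSpace ℝ E] (K : PointedCone ℝ E) :
    ¬ Dense (K : Set E) ↔ ∃ f : StrongDual ℝ E, f ≠ 0 ∧ ∀ x ∈ K, 0 ≤ f x := by
  constructor
  · intro hK
    obtain ⟨x₀, hx₀⟩ := not_forall.1 hK
    obtain ⟨f, hf, hfx₀⟩ := ProperCone.hyperplane_separation_point (Submodule.closure K) hx₀
    exact ⟨f, by rintro rfl; simp at hfx₀, fun x hx => hf x (subset_closure hx)⟩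
  · rintro ⟨f, hf0, hf⟩ hK
    obtain ⟨v, hv⟩ := DFunLike.ne_iff.1 hf0
    have hclosure : closure (K : Set E) ⊆ {x | 0 ≤ f x} :=
      closure_minimal hf (isClosed_le continuous_const f.continuous)
    have h₁ := hclosure (hK v)
    have h₂ := hclosure (hK (-v))
    simp only [Set.mem_ofPred_eq, map_neg, neg_nonneg] at h₁ h₂
    exact hv (le_antisymm h₂ h₁)

theorem extension_of_functionals_via_almost_interior_points_general
    {X : Type*} [NormedAddCommGroup X] [NormedSpace ℝ X]
    (C : Set X)
    (hcone : ∀ (a b : ℝ), 0 ≤ a → 0 ≤ b → ∀ x ∈ C, ∀ y ∈ C, a • x + b • y ∈ C)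
    (Y : Submodule ℝ X) (y' : Y →ₗ[ℝ] ℝ)
    (y₀ : X) (hy₀Y : y₀ ∈ Y) (hy₀C : y₀ ∈ C)
    (hy₀ai : ∀ x' : X →L[ℝ] ℝ, (∀ x ∈ C, 0 ≤ x' x) → x' ≠ 0 → 0 < x' y₀) :
    List.TFAE
      [∃ x' : X →L[ℝ] ℝ, x' ≠ 0 ∧ (∀ x ∈ C, 0 ≤ x' x) ∧ ∀ z : Y, x' (z : X) = y' z,
       ¬ Dense {w : X | ∃ u ∈ C, ∃ z : Y, y' z = 0 ∧ w = u + (z : X)} ∧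
         0 < y' ⟨y₀, hy₀Y⟩,
       ¬ Dense {w : X | ∃ u ∈ C, ∃ z : Y, y' z = 0 ∧ w = u + (z : X)} ∧
         ∀ y : Y, (y : X) ∈ C →
           (∀ x' : X →L[ℝ] ℝ, (∀ x ∈ C, 0 ≤ x' x) → x' ≠ 0 → 0 < x' (y : X)) →
           0 < y' y] := by
  let P : PointedCone ℝ X :=
    .ofConeComb C ⟨y₀, hy₀C⟩ fun x hx y hy a ha b hb => hcone a b ha hb x hx y hy
  let L : Submodule ℝ X := (LinearMap.ker y').map Y.subtype
  have hS : {w : X | ∃ u ∈ C, ∃ z : Y, y' z = 0 ∧ w = u + (z : X)} =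
      (P ⊔ (L : PointedCone ℝ X) :) :=
    (PointedCone.coe_sup_map_subtype_ker P Y y').symm
  rw [hS]
  tfae_have 1 → 3 := by
    rintro ⟨x', hx'0, hx'C, hx'Y⟩
    refine ⟨(PointedCone.not_dense_iff_exists_ne_zero_nonneg _).2 ⟨x', hx'0, ?_⟩,
      fun y _ hy => hx'Y y ▸ hy x' hx'C hx'0⟩
    refine (PointedCone.forall_mem_sup_nonneg_iff P L x').2 ⟨hx'C, ?_⟩
    rintro _ ⟨z, hz, rfl⟩
    exact (hx'Y z).trans hz
  tfae_have 3 → 2 := fun ⟨hnd, hpos⟩ => ⟨hnd, hpos ⟨y₀, hy₀Y⟩ hy₀C hy₀ai⟩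
  tfae_have 2 → 1 := by
    rintro ⟨hnd, hy'y₀⟩
    obtain ⟨f, hf0, hfK⟩ := (PointedCone.not_dense_iff_exists_ne_zero_nonneg _).1 hnd
    obtain ⟨hfC, hfL⟩ := (PointedCone.forall_mem_sup_nonneg_iff P L f).1 hfK
    obtain ⟨c, hc, hext⟩ :=
      LinearMap.exists_pos_smul_comp_subtype_eq (f := f.toLinearMap) (g := y')
        (fun z hz => hfL _ (Submodule.mem_map_of_mem hz)) (hy₀ai f hfC hf0) hy'y₀
    exact ⟨c • f, smul_ne_zero hc.ne' hf0, fun x hx => mul_nonneg hc.le (hfC x hx),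
      LinearMap.congr_fun hext⟩
  tfae_finish

/-- Extension of linear functionals to positive functionals via almost
interior points. Let `Y ⊆ X` be a (not necessarily closed) vector subspace containing an
almost interior point `y₀` of `X₊` and let `y' : Y → ℝ` be linear (not assumed
continuous). Then the following are equivalent:
(i) `y'` extends to a nonzero positive functional `x' ∈ X'`;
(ii) `X₊ + ker y'` is not dense in `X` and `⟨y', y₀⟩ > 0`;
(iii) `X₊ + ker y'` is not dense in `X` and `⟨y', y⟩ > 0` for every `y ∈ Y` which is an
almost interior point of `X₊`. -/
theorem extension_of_functionals_via_almost_interior_points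
    {X : Type*} [NormedAddCommGroup X] [NormedSpace ℝ X] [CompleteSpace X]
    (C : Set X) (hne : C.Nonempty) (hclosed : IsClosed C)
    (hcone : ∀ (a b : ℝ), 0 ≤ a → 0 ≤ b → ∀ x ∈ C, ∀ y ∈ C, a • x + b • y ∈ C)
    (hpointed : ∀ x ∈ C, -x ∈ C → x = 0)
    (Y : Submodule ℝ X) (y' : Y →ₗ[ℝ] ℝ)
    (y₀ : X) (hy₀Y : y₀ ∈ Y) (hy₀C : y₀ ∈ C)
    (hy₀ai : ∀ x' : X →L[ℝ] ℝ, (∀ x ∈ C, 0 ≤ x' x) → x' ≠ 0 → 0 < x' y₀) :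
    List.TFAE
      [∃ x' : X →L[ℝ] ℝ, x' ≠ 0 ∧ (∀ x ∈ C, 0 ≤ x' x) ∧ ∀ z : Y, x' (z : X) = y' z,
       ¬ Dense {w : X | ∃ u ∈ C, ∃ z : Y, y' z = 0 ∧ w = u + (z : X)} ∧
         0 < y' ⟨y₀, hy₀Y⟩,
       ¬ Dense {w : X | ∃ u ∈ C, ∃ z : Y, y' z = 0 ∧ w = u + (z : X)} ∧
         ∀ y : Y, (y : X) ∈ C →
           (∀ x' : X →L[ℝ] ℝ, (∀ x ∈ C, 0 ≤ x' x) → x' ≠ 0 → 0 < x' (y : X)) →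
           0 < y' y] :=
  extension_of_functionals_via_almost_interior_points_general C hcone Y y' y₀ hy₀Y hy₀C hy₀ai
end

section
/- Let (X, X_+) and (Y, Y_+) be ordered Banach spaces such that X_+ contains an almost interior point, and let T : X → Y be a positive bounded linear operator. Then the following are equivalent: (i) there exists x ∈ X_+ such that Tx is an almost interior point of Y_+; (ii) the only positive functional y' ∈ Y' with T'y' = 0 (where T' is the adjoint of T) is y' = 0; (iii) T maps every almost interior point of X_+ to an almost interior point of Y_+. -/
theorem ContinuousLinearMap.pos_apply_of_comp_ne_zero
    {X Y : Type*} [TopologicalSpace X] [AddCommMonoid X] [Module ℝ X]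
    [TopologicalSpace Y] [AddCommMonoid Y] [Module ℝ Y]
    {C : Set X} {D : Set Y} {x : X}
    (hx : ∀ x' : X →L[ℝ] ℝ, (∀ z ∈ C, 0 ≤ x' z) → x' ≠ 0 → 0 < x' x)
    {T : X →L[ℝ] Y} (hT : ∀ z ∈ C, T z ∈ D)
    {y' : Y →L[ℝ] ℝ} (hy' : ∀ y ∈ D, 0 ≤ y' y) (hy'T : y'.comp T ≠ 0) :
    0 < y' (T x) :=
  hx (y'.comp T) (fun z hz => hy' _ (hT z hz)) hy'T

theorem almost_interior_points_by_functional_condition_general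
    {X : Type*} [NormedAddCommGroup X] [NormedSpace ℝ X]
    {Y : Type*} [NormedAddCommGroup Y] [NormedSpace ℝ Y]
    (C : Set X)
    (D : Set Y)
    (x₀ : X) (hx₀C : x₀ ∈ C)
    (hx₀ai : ∀ x' : X →L[ℝ] ℝ, (∀ x ∈ C, 0 ≤ x' x) → x' ≠ 0 → 0 < x' x₀)
    (T : X →L[ℝ] Y) (hTpos : ∀ x ∈ C, T x ∈ D) :
    List.TFAE
      [∃ x ∈ C, ∀ y' : Y →L[ℝ] ℝ, (∀ y ∈ D, 0 ≤ y' y) → y' ≠ 0 → 0 < y' (T x),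
       ∀ y' : Y →L[ℝ] ℝ, (∀ y ∈ D, 0 ≤ y' y) → y'.comp T = 0 → y' = 0,
       ∀ x ∈ C, (∀ x' : X →L[ℝ] ℝ, (∀ z ∈ C, 0 ≤ x' z) → x' ≠ 0 → 0 < x' x) →
         ∀ y' : Y →L[ℝ] ℝ, (∀ y ∈ D, 0 ≤ y' y) → y' ≠ 0 → 0 < y' (T x)] := by
  tfae_have 1 → 2 := by
    rintro ⟨x, -, hx⟩ y' hy' hy'T
    by_contra hy'_ne
    have hzero : y' (T x) = 0 := by simpa using congrArg (· x) hy'T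
    exact (hx y' hy' hy'_ne).ne' hzero
  tfae_have 2 → 3 := fun h2 x _ hx y' hy' hy'_ne =>
    ContinuousLinearMap.pos_apply_of_comp_ne_zero hx hTpos hy' (mt (h2 y' hy') hy'_ne)
  tfae_have 3 → 1 := fun h3 => ⟨x₀, hx₀C, h3 x₀ hx₀C hx₀ai⟩
  tfae_finish

/-- Let `X, Y` be ordered Banach spaces such that `X₊` contains an
almost interior point, and let `T : X → Y` be a positive bounded operator. TFAE:
(i) `T x` is an almost interior point of `Y₊` for some `x ∈ X₊`;
(ii) `ker T' ∩ Y'₊ = {0}`;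
(iii) `T` maps almost interior points of `X₊` to almost interior points of `Y₊`. -/
theorem almost_interior_points_by_functional_condition
    {X : Type*} [NormedAddCommGroup X] [NormedSpace ℝ X] [CompleteSpace X]
    {Y : Type*} [NormedAddCommGroup Y] [NormedSpace ℝ Y] [CompleteSpace Y]
    (C : Set X) (hCne : C.Nonempty) (hCclosed : IsClosed C)
    (hCcone : ∀ (a b : ℝ), 0 ≤ a → 0 ≤ b → ∀ x ∈ C, ∀ y ∈ C, a • x + b • y ∈ C)
    (hCpointed : ∀ x ∈ C, -x ∈ C → x = 0)
    (D : Set Y) (hDne : D.Nonempty) (hDclosed : IsClosed D)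
    (hDcone : ∀ (a b : ℝ), 0 ≤ a → 0 ≤ b → ∀ x ∈ D, ∀ y ∈ D, a • x + b • y ∈ D)
    (hDpointed : ∀ y ∈ D, -y ∈ D → y = 0)
    (x₀ : X) (hx₀C : x₀ ∈ C)
    (hx₀ai : ∀ x' : X →L[ℝ] ℝ, (∀ x ∈ C, 0 ≤ x' x) → x' ≠ 0 → 0 < x' x₀)
    (T : X →L[ℝ] Y) (hTpos : ∀ x ∈ C, T x ∈ D) :
    List.TFAE
      [∃ x ∈ C, ∀ y' : Y →L[ℝ] ℝ, (∀ y ∈ D, 0 ≤ y' y) → y' ≠ 0 → 0 < y' (T x),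
       ∀ y' : Y →L[ℝ] ℝ, (∀ y ∈ D, 0 ≤ y' y) → y'.comp T = 0 → y' = 0,
       ∀ x ∈ C, (∀ x' : X →L[ℝ] ℝ, (∀ z ∈ C, 0 ≤ x' z) → x' ≠ 0 → 0 < x' x) →
         ∀ y' : Y →L[ℝ] ℝ, (∀ y ∈ D, 0 ≤ y' y) → y' ≠ 0 → 0 < y' (T x)] :=
  almost_interior_points_by_functional_condition_general C D x₀ hx₀C hx₀ai T hTpos
end

section
/- Let (X, X_+) and (Y, Y_+) be ordered Banach spaces, let x ∈ X be an almost interior point of X_+, and let T : X → Y be a positive bounded linear operator with dense range. Then Tx is an almost interior point of Y_+. -/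
theorem ContinuousLinearMap.comp_ne_zero_of_denseRange
    {R E F G : Type*} [Semiring R] [TopologicalSpace E] [AddCommMonoid E] [Module R E]
    [TopologicalSpace F] [AddCommMonoid F] [Module R F]
    [TopologicalSpace G] [T2Space G] [AddCommMonoid G] [Module R G]
    {f : F →L[R] G} (hf : f ≠ 0) {T : E →L[R] F} (hT : DenseRange T) : f.comp T ≠ 0 := by
  intro hfT
  apply hf
  have : ⇑f ∘ ⇑T = (fun _ ↦ (0 : G)) ∘ ⇑T := funext fun z ↦ by
    simpa using DFunLike.congr_fun hfT z
  exact DFunLike.coe_injective (hT.equalizer f.continuous continuous_const this)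

theorem almost_interior_point_image_of_dense_range_general
    {X : Type*} [NormedAddCommGroup X] [NormedSpace ℝ X]
    {Y : Type*} [NormedAddCommGroup Y] [NormedSpace ℝ Y]
    (C : Set X) (D : Set Y)
    (x : X) (hxC : x ∈ C)
    (hxai : ∀ x' : X →L[ℝ] ℝ, (∀ z ∈ C, 0 ≤ x' z) → x' ≠ 0 → 0 < x' x)
    (T : X →L[ℝ] Y) (hTpos : ∀ z ∈ C, T z ∈ D)
    (hTrange : DenseRange T) :
    T x ∈ D ∧ ∀ y' : Y →L[ℝ] ℝ, (∀ y ∈ D, 0 ≤ y' y) → y' ≠ 0 → 0 < y' (T x) :=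
  ⟨hTpos x hxC, fun y' hy'pos hy'ne ↦
    hxai (y'.comp T) (fun z hz ↦ hy'pos (T z) (hTpos z hz))
      (y'.comp_ne_zero_of_denseRange hy'ne hTrange)⟩

/-- A positive bounded operator `T : X → Y` with dense range between
ordered Banach spaces maps every almost interior point of `X₊` to an almost interior
point of `Y₊`. -/
theorem almost_interior_point_image_of_dense_range
    {X : Type*} [NormedAddCommGroup X] [NormedSpace ℝ X] [CompleteSpace X]
    {Y : Type*} [NormedAddCommGroup Y] [NormedSpace ℝ Y] [CompleteSpace Y]
    (C : Set X) (hCne : C.Nonempty) (hCclosed : IsClosed C)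
    (hCcone : ∀ (a b : ℝ), 0 ≤ a → 0 ≤ b → ∀ x ∈ C, ∀ y ∈ C, a • x + b • y ∈ C)
    (hCpointed : ∀ x ∈ C, -x ∈ C → x = 0)
    (D : Set Y) (hDne : D.Nonempty) (hDclosed : IsClosed D)
    (hDcone : ∀ (a b : ℝ), 0 ≤ a → 0 ≤ b → ∀ x ∈ D, ∀ y ∈ D, a • x + b • y ∈ D)
    (hDpointed : ∀ y ∈ D, -y ∈ D → y = 0)
    (x : X) (hxC : x ∈ C)
    (hxai : ∀ x' : X →L[ℝ] ℝ, (∀ z ∈ C, 0 ≤ x' z) → x' ≠ 0 → 0 < x' x)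
    (T : X →L[ℝ] Y) (hTpos : ∀ z ∈ C, T z ∈ D)
    (hTrange : DenseRange T) :
    T x ∈ D ∧ ∀ y' : Y →L[ℝ] ℝ, (∀ y ∈ D, 0 ≤ y' y) → y' ≠ 0 → 0 < y' (T x) :=
  almost_interior_point_image_of_dense_range_general C D x hxC hxai T hTpos hTrange
end

section
/- Let (X, X_+) be an ordered Banach space with X_+ ≠ {0} and let (T_t)_{t ∈ [0,∞)} be a positive operator semigroup on X. Let x be a nonzero vector in X_+ and let t₀ > 0 be such that T_{t₀}x is an almost interior point of X_+. Then for every s ∈ [0,∞) the operator T_s maps almost interior points of X_+ to almost interior points of X_+, and T_t x is an almost interior point of X_+ for every t ≥ t₀. -/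
/-!
If `S z` is an almost interior point of the cone for some `z`, then `φ ∘ S` is a nonzero
positive functional for every nonzero positive `φ`, so a positive `S` maps almost interior
points to almost interior points. Iterating this with `S = T_{t₀}` shows that every
`T_{n t₀} x` (`n ≥ 1`) is almost interior, and for `s ≤ n t₀` the identity
`T_s T_{n t₀ - s} x = T_{n t₀} x` puts every `T_s` in the situation of the first sentence.
-/

open Set

section AlmostInterior

variable {E : Type*} [AddCommGroup E] [Module ℝ E] [TopologicalSpace E]

def IsAlmostInteriorPoint (C : Set E) (y : E) : Prop :=
  ∀ φ : E →L[ℝ] ℝ, (∀ z ∈ C, 0 ≤ φ z) → φ ≠ 0 → 0 < φ y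

variable {C : Set E}

theorem IsAlmostInteriorPoint.apply_of_apply {S : E →L[ℝ] E} {z : E}
    (hz : IsAlmostInteriorPoint C (S z)) (hS : MapsTo S C C) {y : E}
    (hy : IsAlmostInteriorPoint C y) :
    IsAlmostInteriorPoint C (S y) := by
  intro φ hφ hφ0
  have hcomp_ne : φ.comp S ≠ 0 := fun h => (hz φ hφ hφ0).ne' (by simpa using congr($h z))
  simpa using hy (φ.comp S) (fun w hw => hφ _ (hS hw)) hcomp_ne

variable {T : ℝ → E →L[ℝ] E}

theorem isAlmostInteriorPoint_semigroup_succ_mul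
    (hTsg : ∀ s t : ℝ, 0 ≤ s → 0 ≤ t → T (s + t) = (T s).comp (T t))
    (hTpos : ∀ t : ℝ, 0 ≤ t → MapsTo (T t) C C) {x : E} {t₀ : ℝ} (ht₀ : 0 ≤ t₀)
    (hai : IsAlmostInteriorPoint C (T t₀ x)) (n : ℕ) :
    IsAlmostInteriorPoint C (T ((n + 1) * t₀) x) := by
  induction n with
  | zero => simpa using hai
  | succ n ih =>
    have hsplit : T ((↑(n + 1) + 1) * t₀) = (T t₀).comp (T ((n + 1) * t₀)) := by
      rw [← hTsg _ _ ht₀ (by positivity)]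
      congr 1
      push_cast
      ring
    rw [hsplit]
    exact hai.apply_of_apply (hTpos t₀ ht₀) ih

theorem isAlmostInteriorPoint_semigroup_apply
    (hTsg : ∀ s t : ℝ, 0 ≤ s → 0 ≤ t → T (s + t) = (T s).comp (T t))
    (hTpos : ∀ t : ℝ, 0 ≤ t → MapsTo (T t) C C) {x : E} {t₀ : ℝ} (ht₀ : 0 < t₀)
    (hai : IsAlmostInteriorPoint C (T t₀ x)) {s : ℝ} (hs : 0 ≤ s) {y : E}
    (hy : IsAlmostInteriorPoint C y) : IsAlmostInteriorPoint C (T s y) := by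
  obtain ⟨n, hn⟩ := exists_nat_ge (s / t₀)
  have hsn : s ≤ (n + 1) * t₀ := by
    rw [div_le_iff₀ ht₀] at hn
    nlinarith
  have hreach : T s (T ((n + 1) * t₀ - s) x) = T ((n + 1) * t₀) x := by
    rw [← ContinuousLinearMap.comp_apply, ← hTsg _ _ hs (by linarith), add_sub_cancel]
  have hreached : IsAlmostInteriorPoint C (T s (T ((n + 1) * t₀ - s) x)) := by
    rw [hreach]
    exact isAlmostInteriorPoint_semigroup_succ_mul hTsg hTpos ht₀.le hai n
  exact hreached.apply_of_apply (hTpos s hs) hy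

end AlmostInterior

theorem semigroup_maps_almost_interior_points_general
    {X : Type*} [NormedAddCommGroup X] [NormedSpace ℝ X]
    (C : Set X)
    (T : ℝ → (X →L[ℝ] X))
    (hTsg : ∀ s t : ℝ, 0 ≤ s → 0 ≤ t → T (s + t) = (T s).comp (T t))
    (hTpos : ∀ t : ℝ, 0 ≤ t → ∀ x ∈ C, T t x ∈ C)
    (x : X)
    (t₀ : ℝ) (ht₀ : 0 < t₀)
    (hai : ∀ x' : X →L[ℝ] ℝ, (∀ z ∈ C, 0 ≤ x' z) → x' ≠ 0 → 0 < x' (T t₀ x)) :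
    (∀ s : ℝ, 0 ≤ s → ∀ y ∈ C,
        (∀ x' : X →L[ℝ] ℝ, (∀ z ∈ C, 0 ≤ x' z) → x' ≠ 0 → 0 < x' y) →
        ∀ x' : X →L[ℝ] ℝ, (∀ z ∈ C, 0 ≤ x' z) → x' ≠ 0 → 0 < x' (T s y)) ∧
      (∀ t : ℝ, t₀ ≤ t →
        ∀ x' : X →L[ℝ] ℝ, (∀ z ∈ C, 0 ≤ x' z) → x' ≠ 0 → 0 < x' (T t x)) := by
  have hpos : ∀ t : ℝ, 0 ≤ t → MapsTo (T t) C C := fun t ht z hz => hTpos t ht z hz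
  have hmaps : ∀ s : ℝ, 0 ≤ s → ∀ y, IsAlmostInteriorPoint C y →
      IsAlmostInteriorPoint C (T s y) := fun s hs y hy =>
    isAlmostInteriorPoint_semigroup_apply hTsg hpos ht₀ hai hs hy
  refine ⟨fun s hs y _ hy => hmaps s hs y hy, fun t ht => ?_⟩
  have hsplit : T t x = T (t - t₀) (T t₀ x) := by
    rw [← ContinuousLinearMap.comp_apply, ← hTsg _ _ (by linarith) ht₀.le, sub_add_cancel]
  rw [hsplit]
  exact hmaps (t - t₀) (by linarith) _ hai

/-- Let `(T_t)_{t ∈ [0,∞)}` be a positive operator semigroup on an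
ordered Banach space with nonzero positive cone. If `T_{t₀} x` is an almost interior
point of `X₊` for some nonzero `x ∈ X₊` and some `t₀ > 0`, then each `T_s`, `s ≥ 0`,
maps almost interior points of `X₊` to almost interior points of `X₊`, and `T_t x` is an
almost interior point of `X₊` for all `t ≥ t₀`. -/
theorem semigroup_maps_almost_interior_points
    {X : Type*} [NormedAddCommGroup X] [NormedSpace ℝ X] [CompleteSpace X]
    (C : Set X) (hne : C.Nonempty) (hclosed : IsClosed C)
    (hcone : ∀ (a b : ℝ), 0 ≤ a → 0 ≤ b → ∀ x ∈ C, ∀ y ∈ C, a • x + b • y ∈ C)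
    (hpointed : ∀ x ∈ C, -x ∈ C → x = 0)
    (hCnz : C ≠ {0})
    (T : ℝ → (X →L[ℝ] X))
    (hT0 : T 0 = ContinuousLinearMap.id ℝ X)
    (hTsg : ∀ s t : ℝ, 0 ≤ s → 0 ≤ t → T (s + t) = (T s).comp (T t))
    (hTpos : ∀ t : ℝ, 0 ≤ t → ∀ x ∈ C, T t x ∈ C)
    (x : X) (hxC : x ∈ C) (hxnz : x ≠ 0)
    (t₀ : ℝ) (ht₀ : 0 < t₀)
    (hai : ∀ x' : X →L[ℝ] ℝ, (∀ z ∈ C, 0 ≤ x' z) → x' ≠ 0 → 0 < x' (T t₀ x)) :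
    (∀ s : ℝ, 0 ≤ s → ∀ y ∈ C,
        (∀ x' : X →L[ℝ] ℝ, (∀ z ∈ C, 0 ≤ x' z) → x' ≠ 0 → 0 < x' y) →
        ∀ x' : X →L[ℝ] ℝ, (∀ z ∈ C, 0 ≤ x' z) → x' ≠ 0 → 0 < x' (T s y)) ∧
      (∀ t : ℝ, t₀ ≤ t →
        ∀ x' : X →L[ℝ] ℝ, (∀ z ∈ C, 0 ≤ x' z) → x' ≠ 0 → 0 < x' (T t x)) :=
  semigroup_maps_almost_interior_points_general C T hTsg hTpos x t₀ ht₀ hai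
end

section
/- Let X be a real Banach space, let T be a bounded linear operator on X which is quasi-compact, and let S be a bounded linear operator on X which is power bounded and commutes with T. Then the operator TS is quasi-compact. -/
/-!
If `‖T ^ m - K‖ = r < 1` with `K` compact, then modulo the two-sided ideal of compact operators
`T ^ (m * n)` agrees with `(T ^ m - K) ^ n`, whose norm is at most `r ^ n`. Since `S` commutes with
`T`, `(T * S) ^ (m * n) = T ^ (m * n) * S ^ (m * n)` agrees modulo compacts with
`(T ^ m - K) ^ n * S ^ (m * n)`, of norm at most `r ^ n * M`, which is `< 1` for large `n`.
-/

open Filter Topology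

section CompactIdeal

variable {R M : Type*} [Ring R] [TopologicalSpace M] [AddCommGroup M] [Module R M]

theorem IsCompactOperator.mul_left {K : M →L[R] M} (hK : IsCompactOperator K) (A : M →L[R] M) :
    IsCompactOperator (A * K) :=
  hK.clm_comp A

theorem IsCompactOperator.mul_right {K : M →L[R] M} (hK : IsCompactOperator K) (A : M →L[R] M) :
    IsCompactOperator (K * A) :=
  hK.comp_clm A

variable [IsTopologicalAddGroup M]

theorem IsCompactOperator.exists_pow_sub_eq_sub_pow {K : M →L[R] M} (hK : IsCompactOperator K)
    (A : M →L[R] M) (n : ℕ) : ∃ C : M →L[R] M, IsCompactOperator C ∧ A ^ n - C = (A - K) ^ n := by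
  induction n with
  | zero => exact ⟨0, isCompactOperator_zero, by simp⟩
  | succ n ih =>
    obtain ⟨C, hC, hpow⟩ := ih
    refine ⟨A ^ n * K + C * A - C * K,
      ((hK.mul_left _).add (hC.mul_right A)).sub (hC.mul_right K), ?_⟩
    rw [pow_succ, pow_succ, ← hpow]
    noncomm_ring

end CompactIdeal

theorem exists_pos_pow_mul_lt_one {r : ℝ} (hr₀ : 0 ≤ r) (hr₁ : r < 1) (M : ℝ) :
    ∃ n : ℕ, 0 < n ∧ r ^ n * M < 1 := by
  have hlim : Tendsto (fun n : ℕ => r ^ n * M) atTop (𝓝 0) := by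
    simpa using (tendsto_pow_atTop_nhds_zero_of_lt_one hr₀ hr₁).mul_const M
  obtain ⟨n, hlt, hpos⟩ :=
    ((hlim.eventually (eventually_lt_nhds one_pos)).and (eventually_gt_atTop 0)).exists
  exact ⟨n, hpos, hlt⟩

theorem quasiCompact_mul_of_powerBounded_commute_general
    {X : Type*} [NormedAddCommGroup X] [NormedSpace ℝ X]
    (T S : X →L[ℝ] X)
    (hT : ∃ m : ℕ, 0 < m ∧ ∃ K : X →L[ℝ] X, IsCompactOperator K ∧ ‖T ^ m - K‖ < 1)
    (hS : ∃ M : ℝ, ∀ n : ℕ, ‖S ^ n‖ ≤ M)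
    (hcomm : T * S = S * T) :
    ∃ m : ℕ, 0 < m ∧ ∃ K : X →L[ℝ] X, IsCompactOperator K ∧ ‖(T * S) ^ m - K‖ < 1 := by
  obtain ⟨m, hm, K, hK, hR⟩ := hT
  obtain ⟨M, hM⟩ := hS
  obtain ⟨n, hn, hsmall⟩ := exists_pos_pow_mul_lt_one (norm_nonneg _) hR M
  obtain ⟨C, hC, hpow⟩ := hK.exists_pow_sub_eq_sub_pow (T ^ m) n
  refine ⟨m * n, Nat.mul_pos hm hn, C * S ^ (m * n), hC.mul_right _, ?_⟩
  calc ‖(T * S) ^ (m * n) - C * S ^ (m * n)‖ = ‖(T ^ m - K) ^ n * S ^ (m * n)‖ := by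
        rw [(show Commute T S from hcomm).mul_pow, pow_mul T, ← sub_mul, hpow]
    _ ≤ ‖T ^ m - K‖ ^ n * M :=
        (norm_mul_le _ _).trans (mul_le_mul (norm_pow_le' _ hn) (hM _) (norm_nonneg _)
          (pow_nonneg (norm_nonneg _) _))
    _ < 1 := hsmall

/-- If `T` is quasi-compact and `S` is power bounded and commutes with
`T`, then `T * S` is quasi-compact. -/
theorem quasiCompact_mul_of_powerBounded_commute
    {X : Type*} [NormedAddCommGroup X] [NormedSpace ℝ X] [CompleteSpace X]
    (T S : X →L[ℝ] X)
    (hT : ∃ m : ℕ, 0 < m ∧ ∃ K : X →L[ℝ] X, IsCompactOperator K ∧ ‖T ^ m - K‖ < 1)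
    (hS : ∃ M : ℝ, ∀ n : ℕ, ‖S ^ n‖ ≤ M)
    (hcomm : T * S = S * T) :
    ∃ m : ℕ, 0 < m ∧ ∃ K : X →L[ℝ] X, IsCompactOperator K ∧ ‖(T * S) ^ m - K‖ < 1 :=
  quasiCompact_mul_of_powerBounded_commute_general T S hT hS hcomm
end

section
/- Let X be a real Banach space and let (T_t)_{t ∈ [0,∞)} be a bounded operator semigroup on X. If T_{t₀} is quasi-compact for some time t₀ ∈ [0,∞), then T_t is quasi-compact for every time t ∈ (0,∞). -/
/-! If `‖A ^ m - K‖ < 1` with `K` compact, then `A ^ (m * j)` differs by a compact operator from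
`(A ^ m - K) ^ j`, whose norm tends to `0`. Given `t > 0`, write `T t ^ n = T r * T t₀ ^ k` with
`r ≥ 0`; since `‖T r‖ ≤ M`, it suffices to approximate `T t₀ ^ k` by a compact operator to within
`1 / (M + 1)`. -/

open Filter

def IsQuasiCompact {𝕜 E : Type*} [NontriviallyNormedField 𝕜] [NormedAddCommGroup E]
    [NormedSpace 𝕜 E] (A : E →L[𝕜] E) : Prop :=
  ∃ m : ℕ, 0 < m ∧ ∃ K : E →L[𝕜] E, IsCompactOperator K ∧ ‖A ^ m - K‖ < 1

section

variable {𝕜 E : Type*} [NontriviallyNormedField 𝕜] [NormedAddCommGroup E] [NormedSpace 𝕜 E]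

theorem IsCompactOperator.pow_sub_pow {A B : E →L[𝕜] E} (h : IsCompactOperator (A - B))
    (k : ℕ) : IsCompactOperator (A ^ k - B ^ k) := by
  induction k with
  | zero => simpa using isCompactOperator_zero
  | succ k ih =>
    have hsplit : A ^ (k + 1) - B ^ (k + 1) = A ^ k * (A - B) + (A ^ k - B ^ k) * B := by
      rw [pow_succ, pow_succ]; noncomm_ring
    rw [hsplit]
    exact (h.clm_comp (A ^ k)).add (ih.comp_clm B)

theorem IsQuasiCompact.exists_pow_sub_norm_lt {A : E →L[𝕜] E} (hA : IsQuasiCompact A)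
    {ε : ℝ} (hε : 0 < ε) :
    ∃ k : ℕ, 0 < k ∧ ∃ C : E →L[𝕜] E, IsCompactOperator C ∧ ‖A ^ k - C‖ < ε := by
  obtain ⟨m, hm, K, hK, hQ⟩ := hA
  set Q := A ^ m - K
  obtain ⟨j, hj, hQj⟩ : ∃ j : ℕ, 0 < j ∧ ‖Q‖ ^ j < ε :=
    ((tendsto_pow_atTop_nhds_zero_of_lt_one (norm_nonneg Q) hQ).eventually
      (gt_mem_nhds hε) |>.and (eventually_gt_atTop 0)).exists.imp fun _ h => h.symm
  have hKQ : IsCompactOperator (A ^ m - Q) := by simpa [Q] using hK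
  refine ⟨m * j, Nat.mul_pos hm hj, (A ^ m) ^ j - Q ^ j, hKQ.pow_sub_pow j, ?_⟩
  rw [pow_mul, sub_sub_cancel]
  exact (norm_pow_le' Q hj).trans_lt hQj

end

section

variable {𝕜 X : Type*} [NontriviallyNormedField 𝕜] [NormedAddCommGroup X] [NormedSpace 𝕜 X]
  {T : ℝ → X →L[𝕜] X}

theorem semigroup_pow_eq (hT : ∀ s t : ℝ, 0 ≤ s → 0 ≤ t → T (s + t) = (T s).comp (T t))
    {s : ℝ} (hs : 0 ≤ s) {n : ℕ} (hn : 0 < n) : T s ^ n = T (n * s) := by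
  induction n, hn using Nat.le_induction with
  | base => simp
  | succ n hn ih =>
    rw [pow_succ, ih, Nat.cast_succ, add_one_mul, hT _ _ (by positivity) hs]
    rfl

end

theorem quasiCompact_of_semigroup_member_quasiCompact_general
    {X : Type*} [NormedAddCommGroup X] [NormedSpace ℝ X]
    (T : ℝ → (X →L[ℝ] X))
    (hTsg : ∀ s t : ℝ, 0 ≤ s → 0 ≤ t → T (s + t) = (T s).comp (T t))
    (hbdd : ∃ M : ℝ, ∀ t : ℝ, 0 ≤ t → ‖T t‖ ≤ M)
    (t₀ : ℝ) (ht₀ : 0 ≤ t₀)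
    (hqc : ∃ m : ℕ, 0 < m ∧ ∃ K : X →L[ℝ] X, IsCompactOperator K ∧ ‖T t₀ ^ m - K‖ < 1) :
    ∀ t : ℝ, 0 < t →
      ∃ m : ℕ, 0 < m ∧ ∃ K : X →L[ℝ] X, IsCompactOperator K ∧ ‖T t ^ m - K‖ < 1 := by
  intro t ht
  obtain ⟨M, hM⟩ := hbdd
  have hM0 : 0 ≤ M := (norm_nonneg _).trans (hM 0 le_rfl)
  obtain ⟨k, hk, C, hC, hkC⟩ :=
    IsQuasiCompact.exists_pow_sub_norm_lt hqc (inv_pos.mpr (by linarith : 0 < M + 1))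
  obtain ⟨n, hn⟩ := exists_nat_gt (k * t₀ / t)
  have hnt : k * t₀ < n * t := (div_lt_iff₀ ht).mp hn
  have hn0 : 0 < n := by exact_mod_cast (div_nonneg (by positivity) ht.le).trans_lt hn
  set r := n * t - k * t₀
  have hsplit : T t ^ n - T r * C = T r * (T t₀ ^ k - C) := by
    rw [semigroup_pow_eq hTsg ht.le hn0, semigroup_pow_eq hTsg ht₀ hk, mul_sub,
      ← sub_add_cancel ((n : ℝ) * t) (k * t₀), hTsg _ _ (by linarith) (by positivity)]
    rfl
  refine ⟨n, hn0, T r * C, hC.clm_comp (T r), ?_⟩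
  rw [hsplit]
  calc ‖T r * (T t₀ ^ k - C)‖ ≤ M * (M + 1)⁻¹ :=
        (norm_mul_le _ _).trans (mul_le_mul (hM r (by linarith)) hkC.le (norm_nonneg _) hM0)
    _ < 1 := by rw [mul_inv_lt_iff₀ (by linarith)]; linarith

/-- Let `(T_t)_{t ∈ [0,∞)}` be a bounded operator semigroup on a Banach
space. If `T_{t₀}` is quasi-compact for some `t₀ ≥ 0`, then `T_t` is quasi-compact for
every `t > 0`. -/
theorem quasiCompact_of_semigroup_member_quasiCompact
    {X : Type*} [NormedAddCommGroup X] [NormedSpace ℝ X] [CompleteSpace X]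
    (T : ℝ → (X →L[ℝ] X))
    (hT0 : T 0 = ContinuousLinearMap.id ℝ X)
    (hTsg : ∀ s t : ℝ, 0 ≤ s → 0 ≤ t → T (s + t) = (T s).comp (T t))
    (hbdd : ∃ M : ℝ, ∀ t : ℝ, 0 ≤ t → ‖T t‖ ≤ M)
    (t₀ : ℝ) (ht₀ : 0 ≤ t₀)
    (hqc : ∃ m : ℕ, 0 < m ∧ ∃ K : X →L[ℝ] X, IsCompactOperator K ∧ ‖T t₀ ^ m - K‖ < 1) :
    ∀ t : ℝ, 0 < t →
      ∃ m : ℕ, 0 < m ∧ ∃ K : X →L[ℝ] X, IsCompactOperator K ∧ ‖T t ^ m - K‖ < 1 :=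
  quasiCompact_of_semigroup_member_quasiCompact_general T hTsg hbdd t₀ ht₀ hqc
end

section
/- Let X be a real Banach space and let T be a bounded linear operator on X which is quasi-compact and power bounded. Then for each x ∈ X the orbit {Tⁿx : n ∈ ℕ₀} is relatively compact in X. -/
open Metric Set

/-! Write `T ^ m = R + K` with `K` compact and `‖R‖ < 1`. Then `T ^ (m * k) = R ^ k + C` with `C`
compact, so every orbit point `T ^ n x` with `n ≥ m * k` lies within `‖R ^ k‖ * sup ‖T ^ j x‖` of
the image of the bounded orbit under `C`, which is relatively compact. Since `‖R ^ k‖ → 0`, the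
orbit is totally bounded, and its closure is compact because `X` is complete. -/

theorem Metric.totallyBounded_of_forall_subset_thickening {α : Type*} [PseudoMetricSpace α]
    {s : Set α} (h : ∀ ε > 0, ∃ t, TotallyBounded t ∧ s ⊆ thickening ε t) :
    TotallyBounded s := by
  refine totallyBounded_iff.2 fun ε hε => ?_
  obtain ⟨t, ht, hst⟩ := h (ε / 2) (half_pos hε)
  obtain ⟨F, hF, htF⟩ := totallyBounded_iff.1 ht (ε / 2) (half_pos hε)
  refine ⟨F, hF, fun x hx => ?_⟩
  obtain ⟨y, hy, hxy⟩ := mem_thickening_iff.1 (hst hx)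
  obtain ⟨z, hz, hyz⟩ := mem_iUnion₂.1 (htF hy)
  refine mem_iUnion₂.2 ⟨z, hz, ?_⟩
  rw [mem_ball] at hyz ⊢
  linarith [dist_triangle x y z]

theorem IsCompactOperator.pow_sub_sub_pow {R M : Type*} [Ring R] [AddCommGroup M] [Module R M]
    [TopologicalSpace M] [IsTopologicalAddGroup M] [ContinuousConstSMul R M]
    {K : M →L[R] M} (hK : IsCompactOperator K) (A : M →L[R] M) (k : ℕ) :
    IsCompactOperator ⇑(A ^ k - (A - K) ^ k) := by
  induction k with
  | zero => simpa using isCompactOperator_zero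
  | succ k ih =>
    have : A ^ (k + 1) - (A - K) ^ (k + 1) = (A ^ k - (A - K) ^ k) * A + (A - K) ^ k * K := by
      rw [pow_succ, pow_succ]; noncomm_ring
    rw [this, FunLike.coe_add]
    exact (ih.comp_clm A).add (hK.clm_comp _)

theorem ContinuousLinearMap.image_subset_thickening_image {𝕜 E F : Type*}
    [NontriviallyNormedField 𝕜] [SeminormedAddCommGroup E] [NormedSpace 𝕜 E]
    [SeminormedAddCommGroup F] [NormedSpace 𝕜 F] {A C : E →L[𝕜] F} {s : Set E} {B ε : ℝ}
    (hs : ∀ y ∈ s, ‖y‖ ≤ B) (h : ‖A - C‖ * B < ε) : A '' s ⊆ thickening ε (C '' s) := by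
  rintro _ ⟨y, hy, rfl⟩
  refine mem_thickening_iff.2 ⟨C y, mem_image_of_mem C hy, ?_⟩
  calc dist (A y) (C y) = ‖(A - C) y‖ := by rw [dist_eq_norm, sub_apply]
    _ ≤ ‖A - C‖ * ‖y‖ := (A - C).le_opNorm y
    _ ≤ ‖A - C‖ * B := by gcongr; exact hs y hy
    _ < ε := h

theorem ContinuousLinearMap.setOf_eq_pow_apply_subset {R M : Type*} [Semiring R]
    [AddCommMonoid M] [Module R M] [TopologicalSpace M] (T : M →L[R] M) (x : M) (k : ℕ) :
    {y | ∃ n : ℕ, y = (T ^ n) x} ⊆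
      (fun j => (T ^ j) x) '' Iio k ∪ ⇑(T ^ k) '' {y | ∃ n : ℕ, y = (T ^ n) x} := by
  rintro _ ⟨n, rfl⟩
  rcases lt_or_ge n k with hn | hn
  · exact Or.inl ⟨n, hn, rfl⟩
  · refine Or.inr ⟨(T ^ (n - k)) x, ⟨n - k, rfl⟩, ?_⟩
    rw [← mul_apply_eq_comp, ← pow_add, Nat.add_sub_cancel' hn]

/-- If `T` is a quasi-compact and power bounded operator on a Banach
space `X`, then every orbit `{Tⁿ x : n ∈ ℕ}` is relatively compact in `X`. -/
theorem orbit_relatively_compact_of_quasiCompact_powerBounded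
    {X : Type*} [NormedAddCommGroup X] [NormedSpace ℝ X] [CompleteSpace X]
    (T : X →L[ℝ] X)
    (hqc : ∃ m : ℕ, 0 < m ∧ ∃ K : X →L[ℝ] X, IsCompactOperator K ∧ ‖T ^ m - K‖ < 1)
    (hpb : ∃ M : ℝ, ∀ n : ℕ, ‖T ^ n‖ ≤ M)
    (x : X) :
    IsCompact (closure {y : X | ∃ n : ℕ, y = (T ^ n) x}) := by
  obtain ⟨m, -, K, hK, hr⟩ := hqc
  obtain ⟨M, hM⟩ := hpb
  set S := {y : X | ∃ n : ℕ, y = (T ^ n) x}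
  have hS : ∀ y ∈ S, ‖y‖ ≤ M * ‖x‖ := by
    rintro _ ⟨n, rfl⟩
    exact (T ^ n).le_of_opNorm_le (hM n) x
  refine (totallyBounded_of_forall_subset_thickening fun ε hε => ?_).closure.isCompact_of_isClosed
    isClosed_closure
  obtain ⟨k, hk⟩ : ∃ k : ℕ, ‖(T ^ m - K) ^ k‖ * (M * ‖x‖) < ε :=
    (((tendsto_pow_atTop_nhds_zero_of_norm_lt_one hr).norm.mul_const _).eventually
      (gt_mem_nhds (by simpa using hε))).exists
  set C := (T ^ m) ^ k - (T ^ m - K) ^ k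
  have hC : TotallyBounded (C '' S) :=
    ((hK.pow_sub_sub_pow (T ^ m) k).isCompact_closure_image_of_bounded
      (isBounded_iff_forall_norm_le.2 ⟨_, hS⟩)).totallyBounded.subset subset_closure
  refine ⟨(fun j => (T ^ j) x) '' Iio (m * k) ∪ C '' S,
    ((finite_Iio _).image _).totallyBounded.union hC, ?_⟩
  calc S ⊆ (fun j => (T ^ j) x) '' Iio (m * k) ∪ ⇑(T ^ (m * k)) '' S :=
        T.setOf_eq_pow_apply_subset x _
    _ ⊆ (fun j => (T ^ j) x) '' Iio (m * k) ∪ thickening ε (C '' S) := by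
        refine union_subset_union_right _ (ContinuousLinearMap.image_subset_thickening_image hS ?_)
        rwa [pow_mul, sub_sub_cancel]
    _ ⊆ thickening ε ((fun j => (T ^ j) x) '' Iio (m * k) ∪ C '' S) :=
        union_subset (subset_union_left.trans (self_subset_thickening hε _))
          (thickening_subset_of_subset ε subset_union_right)
end

section
/- Let X be a real Banach space and let T be a quasi-compact bounded linear operator on X. If the powers Tⁿ converge strongly (i.e., Tⁿx → Px in norm for every x ∈ X) to a bounded linear operator P as n → ∞, then Tⁿ converges to P with respect to the operator norm as n → ∞. -/
/-!
Write `T ^ m = K + E` with `K` compact and `‖E‖ < 1`. Since `P * T = P`, for all `n` and `k`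
`T ^ (n + m * k) - P = (T ^ n - P) * ((T ^ m) ^ k - E ^ k) + (T ^ n - P) * E ^ k`,
and `(T ^ m) ^ k - E ^ k` is compact. By Banach–Steinhaus `‖T ^ n - P‖ ≤ C` for some `C`, so
`T ^ n - P → 0` uniformly on compact sets; hence the first term tends to `0` as `n → ∞` for each
fixed `k`, while the second is at most `C * ‖E ^ k‖`, which is small for large `k`.
-/

open Filter Topology

theorem Equicontinuous.tendstoUniformlyOn_of_tendsto {ι X α : Type*} [TopologicalSpace X]
    [UniformSpace α] {F : ι → X → α} {f : X → α} {l : Filter ι} (hF : Equicontinuous F)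
    {S : Set X} (hS : IsCompact S) (h : Tendsto F l (𝓝 f)) : TendstoUniformlyOn F f l S := by
  have : CompactSpace S := isCompact_iff_compactSpace.mp hS
  rw [tendstoUniformlyOn_iff_tendstoUniformly_comp_coe]
  exact UniformFun.tendsto_iff_tendstoUniformly.1 <|
    ((equicontinuous_restrict_iff _).2 (hF.equicontinuousOn S)).tendsto_uniformFun_iff_pi l _ |>.2
      (tendsto_pi_nhds.2 fun x => tendsto_pi_nhds.1 h x)

theorem IsCompactOperator.tendsto_norm_comp_of_forall_tendsto {𝕜 E F G ι : Type*} [RCLike 𝕜]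
    [NormedAddCommGroup E] [NormedSpace 𝕜 E] [NormedAddCommGroup F] [NormedSpace 𝕜 F]
    [NormedAddCommGroup G] [NormedSpace 𝕜 G] {K : E →L[𝕜] F} {A : ι → F →L[𝕜] G} {l : Filter ι}
    (hK : IsCompactOperator K) (hA : ∃ C, ∀ i, ‖A i‖ ≤ C)
    (h : ∀ y, Tendsto (fun i => A i y) l (𝓝 0)) :
    Tendsto (fun i => ‖(A i).comp K‖) l (𝓝 0) := by
  have hS := hK.isCompact_closure_image_closedBall (f := (K : E →ₗ[𝕜] F)) 1
  have hequi : Equicontinuous ((↑) ∘ A) := ((NormedSpace.equicontinuous_TFAE A).out 5 1).1 hA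
  have hunif := Metric.tendstoUniformlyOn_iff.1 <|
    hequi.tendstoUniformlyOn_of_tendsto hS (f := 0) (tendsto_pi_nhds.2 h)
  refine Metric.tendsto_nhds.2 fun ε hε => ?_
  filter_upwards [hunif (ε / 2) (half_pos hε)] with i hi
  rw [dist_zero_right, norm_norm]
  refine lt_of_le_of_lt ?_ (half_lt_self hε)
  refine ContinuousLinearMap.opNorm_le_of_unit_norm (half_pos hε).le fun x hx => ?_
  simpa using (hi (K x) (subset_closure ⟨x, by simp [hx], rfl⟩)).le

theorem IsCompactOperator.pow_sub_pow_s17 {R M : Type*} [Ring R] [TopologicalSpace M]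
    [AddCommGroup M] [IsTopologicalAddGroup M] [Module R M] {S Q : M →L[R] M}
    (h : IsCompactOperator (S - Q)) (k : ℕ) : IsCompactOperator (S ^ k - Q ^ k) := by
  induction k with
  | zero => simpa using isCompactOperator_zero
  | succ k ih =>
    have : S ^ (k + 1) - Q ^ (k + 1) = S * (S ^ k - Q ^ k) + (S - Q) * Q ^ k := by
      rw [pow_succ', pow_succ']; noncomm_ring
    rw [this]
    exact (ih.clm_comp S).add (h.comp_clm (Q ^ k))

theorem ContinuousLinearMap.mul_pow_eq_of_tendsto_pow_apply {R M : Type*} [Semiring R]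
    [TopologicalSpace M] [T2Space M] [AddCommMonoid M] [Module R M] {T P : M →L[R] M}
    (h : ∀ x, Tendsto (fun n => (T ^ n) x) atTop (𝓝 (P x))) (k : ℕ) : P * T ^ k = P := by
  ext x
  refine tendsto_nhds_unique (h ((T ^ k) x)) ?_
  simpa [pow_add] using (tendsto_add_atTop_iff_nat k).2 (h x)

theorem tendsto_zero_of_shift_le_add {a c : ℕ → ℝ} {b : ℕ → ℕ → ℝ} {s : ℕ → ℕ}
    (ha : ∀ n, 0 ≤ a n) (hb : ∀ k, Tendsto (b k) atTop (𝓝 0)) (hc : Tendsto c atTop (𝓝 0))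
    (h : ∀ k n, a (n + s k) ≤ b k n + c k) : Tendsto a atTop (𝓝 0) := by
  refine tendsto_order.2 ⟨fun ε hε => .of_forall fun n => hε.trans_le (ha n), fun ε hε => ?_⟩
  obtain ⟨k, hk⟩ := (hc.eventually (gt_mem_nhds (half_pos hε))).exists
  rw [← map_add_atTop_eq_nat (s k), eventually_map]
  filter_upwards [(hb k).eventually (gt_mem_nhds (half_pos hε))] with n hn
  linarith [h k n]

/-- If `T` is quasi-compact and the powers `Tⁿ` converge strongly to an
operator `P`, then `Tⁿ → P` in operator norm. -/
theorem uniform_convergence_of_quasiCompact_strong_convergence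
    {X : Type*} [NormedAddCommGroup X] [NormedSpace ℝ X] [CompleteSpace X]
    (T P : X →L[ℝ] X)
    (hqc : ∃ m : ℕ, 0 < m ∧ ∃ K : X →L[ℝ] X, IsCompactOperator K ∧ ‖T ^ m - K‖ < 1)
    (hstrong : ∀ x : X, Tendsto (fun n : ℕ => (T ^ n) x) atTop (nhds (P x))) :
    Tendsto (fun n : ℕ => ‖T ^ n - P‖) atTop (nhds 0) := by
  obtain ⟨m, -, K, hK, hE⟩ := hqc
  set E := T ^ m - K
  have hA (x : X) : Tendsto (fun n => (T ^ n - P) x) atTop (𝓝 0) := by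
    simpa using (hstrong x).sub_const (P x)
  obtain ⟨C, hC⟩ : ∃ C, ∀ n, ‖T ^ n - P‖ ≤ C := by
    refine banach_steinhaus (g := fun n : ℕ => T ^ n - P) fun x => ?_
    obtain ⟨C, hC⟩ := (hA x).norm.bddAbove_range
    exact ⟨C, fun n => hC ⟨n, rfl⟩⟩
  have hcompact (k : ℕ) : IsCompactOperator ((T ^ m) ^ k - E ^ k) :=
    IsCompactOperator.pow_sub_pow_s17 (by rwa [sub_sub_cancel]) k
  have hsplit (k n : ℕ) :
      T ^ (n + m * k) - P = (T ^ n - P) * ((T ^ m) ^ k - E ^ k) + (T ^ n - P) * E ^ k := by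
    rw [← mul_add, sub_add_cancel, sub_mul, ← pow_mul, ← pow_add,
      ContinuousLinearMap.mul_pow_eq_of_tendsto_pow_apply hstrong]
  have hEpow : Tendsto (fun k => C * ‖E ^ k‖) atTop (𝓝 0) := by
    simpa using (tendsto_pow_atTop_nhds_zero_of_norm_lt_one hE).norm.const_mul C
  refine tendsto_zero_of_shift_le_add (s := fun k => m * k) (fun n => norm_nonneg _)
    (fun k => (hcompact k).tendsto_norm_comp_of_forall_tendsto ⟨C, hC⟩ hA) hEpow fun k n => ?_
  rw [hsplit]
  exact (norm_add_le _ _).trans (add_le_add le_rfl ((norm_mul_le _ _).trans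
    (mul_le_mul_of_nonneg_right (hC n) (norm_nonneg _))))
end
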